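/- Duality for submodular minimization: if F is submodular with F(∅)=0, then min over A ⊆ V of F(A) equals max over s ∈ B(F) of s_-(V), where s_- = min(s,0) componentwise. Moreover, for any A ⊆ V and s ∈ B(F), F(A) ≥ s_-(V), with equality iff {s<0} ⊆ A ⊆ {s≤0} and s(A)=F(A). -/

import Mathlib

def Submodular {p : ℕ} (F : Finset (Fin p) → ℝ) : Prop :=
  ∀ A B : Finset (Fin p), F (A ∪ B) + F (A ∩ B) ≤ F A + F B

def MemB {p : ℕ} (F : Finset (Fin p) → ℝ) (s : Fin p → ℝ) : Prop :=
  (∀ A : Finset (Fin p), ∑ k ∈ A, s k ≤ F A) ∧ ∑ k, s k = F Finset.univ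

/-!
Weak duality holds termwise: `min (s k) 0 ≤ 𝟙_A(k) s k` and `s(A) ≤ F(A)`.

For strong duality, maximise `∑ t` over the compact set of `t` in the submodular polyhedron
`P(F) = {t | ∀ A, t(A) ≤ F(A)}` (`MemP`) with `c ≤ t ≤ 0`, for a constant `c` small enough that
`c ∈ P(F)`. At a maximiser every negative coordinate lies in a
tight set, and tight sets are closed under union, so `t₋(V) = t(T) = F(T)` for one tight `T`.
Maximising `∑ r` again over `r ∈ P(F)` with `t ≤ r ≤ (F {k})ₖ` now puts every element in a tight
set, so `V` is tight: `r ∈ B(F)` and `r₋(V) ≥ t₋(V) = F(T)`.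
-/

open Finset

section SumMinZero

variable {ι : Type*} [Fintype ι]

lemma min_zero_eq_ite_iff {a : ℝ} {P : Prop} [Decidable P] :
    min a 0 = (if P then a else 0) ↔ (a < 0 → P) ∧ (P → a ≤ 0) := by
  by_cases hP : P <;> simp [hP]

lemma min_zero_le_ite (a : ℝ) (P : Prop) [Decidable P] : min a 0 ≤ if P then a else 0 := by
  split_ifs
  exacts [min_le_left _ _, min_le_right _ _]

lemma sum_min_zero_le_sum (s : ι → ℝ) (A : Finset ι) : ∑ k, min (s k) 0 ≤ ∑ k ∈ A, s k := by
  classical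
  rw [← Fintype.sum_ite_mem A s]
  exact sum_le_sum fun k _ => min_zero_le_ite _ _

lemma sum_min_zero_eq_sum_iff (s : ι → ℝ) (A : Finset ι) :
    ∑ k, min (s k) 0 = ∑ k ∈ A, s k ↔ (∀ k, s k < 0 → k ∈ A) ∧ ∀ k ∈ A, s k ≤ 0 := by
  classical
  rw [← Fintype.sum_ite_mem A s, sum_eq_sum_iff_of_le fun k _ => min_zero_le_ite _ _]
  simp only [mem_univ, true_implies, min_zero_eq_ite_iff, forall_and]

end SumMinZero

variable {p : ℕ} {F : Finset (Fin p) → ℝ}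

def MemP (F : Finset (Fin p) → ℝ) (s : Fin p → ℝ) : Prop :=
  ∀ A : Finset (Fin p), ∑ k ∈ A, s k ≤ F A

def IsTight (F : Finset (Fin p) → ℝ) (t : Fin p → ℝ) (A : Finset (Fin p)) : Prop :=
  ∑ k ∈ A, t k = F A

lemma MemB.memP {s : Fin p → ℝ} (hs : MemB F s) : MemP F s :=
  hs.1

namespace MemP

variable {s t : Fin p → ℝ}

lemma sum_min_zero_le (hs : MemP F s) (A : Finset (Fin p)) : ∑ k, min (s k) 0 ≤ F A :=
  (sum_min_zero_le_sum s A).trans (hs A)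

lemma sum_min_zero_eq_iff (hs : MemP F s) (A : Finset (Fin p)) :
    ∑ k, min (s k) 0 = F A ↔
      (∀ k, s k < 0 → k ∈ A) ∧ (∀ k ∈ A, s k ≤ 0) ∧ ∑ k ∈ A, s k = F A := by
  rw [← and_assoc, ← sum_min_zero_eq_sum_iff]
  have hsA := sum_min_zero_le_sum s A
  have hFA := hs A
  constructor
  · intro h
    constructor <;> linarith
  · rintro ⟨h, h'⟩
    rw [h, h']

lemma exists_pos_memP_add_single (ht : MemP F t) {k : Fin p}
    (hk : ∀ A, k ∈ A → ∑ j ∈ A, t j < F A) :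
    ∃ ε > 0, ∀ δ ≤ ε, MemP F (t + Pi.single k δ) := by
  obtain ⟨A₀, hkA₀, hmin⟩ := exists_min_image {A | k ∈ A} (fun A => F A - ∑ j ∈ A, t j)
    ⟨{k}, by simp⟩
  refine ⟨F A₀ - ∑ j ∈ A₀, t j, sub_pos.2 (hk A₀ (by simpa using hkA₀)), fun δ hδ A => ?_⟩
  simp only [Pi.add_apply]
  rw [sum_add_distrib, sum_pi_single']
  split_ifs with hkA
  · linarith [hmin A (by simpa using hkA)]
  · simpa using ht A

lemma exists_saturated {u : Fin p → ℝ} (hs : MemP F s) (hsu : s ≤ u) :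
    ∃ t, MemP F t ∧ s ≤ t ∧ t ≤ u ∧ ∀ k, t k < u k → ∃ A, k ∈ A ∧ IsTight F t A := by
  have hclosed : IsClosed {t : Fin p → ℝ | MemP F t} := by
    simp only [MemP, Set.ofPred_forall]
    exact isClosed_iInter fun A =>
      isClosed_le (continuous_finsetSum A fun k _ => continuous_apply k) continuous_const
  obtain ⟨t, ⟨htP, hst, htu⟩, hmax⟩ := (isCompact_Icc.inter_left hclosed).exists_isMaxOn
    ⟨s, hs, le_rfl, hsu⟩ (continuous_finsetSum univ fun k _ => continuous_apply k).continuousOn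
  refine ⟨t, htP, hst, htu, fun k hk => ?_⟩
  by_contra! htight
  obtain ⟨ε, hε, hεP⟩ :=
    htP.exists_pos_memP_add_single fun A hkA => (htP A).lt_of_ne (htight A hkA)
  set δ := min ε (u k - t k)
  have hδ : 0 < δ := lt_min hε (sub_pos.2 hk)
  have hδu : t + Pi.single k δ ≤ u := by
    intro j
    by_cases hj : j = k
    · subst hj
      simp only [Pi.add_apply, Pi.single_eq_same]
      linarith [min_le_right ε (u j - t j)]
    · simpa [hj] using htu j
  have hst' : s ≤ t + Pi.single k δ := hst.trans (le_add_of_nonneg_right (by simpa using hδ.le))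
  have := hmax ⟨hεP δ (min_le_left _ _), hst', hδu⟩
  simp only [Set.mem_ofPred_eq, Pi.add_apply, sum_add_distrib, Fintype.sum_pi_single'] at this
  linarith

end MemP

lemma exists_memP_nonpos (h0 : F ∅ = 0) : ∃ c, MemP F c ∧ c ≤ 0 := by
  set M := ∑ A, |F A|
  have hM : ∀ A, |F A| ≤ M := fun A => single_le_sum (fun B _ => abs_nonneg (F B)) (mem_univ A)
  refine ⟨fun _ => -M, fun A => ?_, fun _ => neg_nonpos.2 ((abs_nonneg _).trans (hM ∅))⟩
  rcases A.eq_empty_or_nonempty with rfl | hA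
  · simp [h0]
  · have hcard : 1 ≤ (#A : ℝ) := by exact_mod_cast hA.card_pos
    rw [sum_const, nsmul_eq_mul]
    nlinarith [neg_abs_le (F A), hM A, abs_nonneg (F A)]

namespace Submodular

variable {t : Fin p → ℝ}

lemma isTight_union (hF : Submodular F) (ht : MemP F t) {A B : Finset (Fin p)}
    (hA : IsTight F t A) (hB : IsTight F t B) : IsTight F t (A ∪ B) := by
  unfold IsTight at *
  have := sum_union_inter (s₁ := A) (s₂ := B) (f := t)
  linarith [ht (A ∪ B), ht (A ∩ B), hF A B]

lemma exists_isTight_superset (hF : Submodular F) (h0 : F ∅ = 0) (ht : MemP F t)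
    (S : Finset (Fin p)) (hS : ∀ k ∈ S, ∃ A, k ∈ A ∧ IsTight F t A) :
    ∃ T, S ⊆ T ∧ IsTight F t T := by
  induction S using Finset.induction_on with
  | empty => exact ⟨∅, subset_rfl, by simp [IsTight, h0]⟩
  | insert k S _ ih =>
    obtain ⟨T, hST, hT⟩ := ih fun j hj => hS j (mem_insert_of_mem hj)
    obtain ⟨A, hkA, hA⟩ := hS k (mem_insert_self k S)
    exact ⟨A ∪ T, insert_subset (mem_union_left _ hkA) (hST.trans subset_union_right),
      hF.isTight_union ht hA hT⟩

lemma exists_memB_le_sum_min_zero (hF : Submodular F) (h0 : F ∅ = 0) :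
    ∃ r, MemB F r ∧ ∃ T, F T ≤ ∑ k, min (r k) 0 := by
  obtain ⟨c, hcP, hc0⟩ := exists_memP_nonpos h0
  obtain ⟨t, htP, -, ht0, htneg⟩ := hcP.exists_saturated hc0
  obtain ⟨T, hT, hTt⟩ := hF.exists_isTight_superset h0 htP {k | t k < 0} (by simpa using htneg)
  obtain ⟨r, hrP, htr, -, hrsat⟩ :=
    htP.exists_saturated (u := fun k => F {k}) fun k => by simpa using htP {k}
  obtain ⟨V, hV, hVr⟩ := hF.exists_isTight_superset h0 hrP univ fun k _ => by
    rcases (show r k ≤ F {k} by simpa using hrP {k}).lt_or_eq with hlt | heq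
    · exact hrsat k hlt
    · exact ⟨{k}, mem_singleton_self k, by simpa [IsTight] using heq⟩
  rw [univ_subset_iff.1 hV] at hVr
  refine ⟨r, ⟨hrP, hVr⟩, T, ?_⟩
  calc F T = ∑ k ∈ T, t k := hTt.symm
    _ = ∑ k, min (t k) 0 :=
      ((sum_min_zero_eq_sum_iff t T).2 ⟨fun k hk => hT (by simpa using hk), fun k _ => ht0 k⟩).symm
    _ ≤ ∑ k, min (r k) 0 := sum_le_sum fun k _ => min_le_min_right 0 (htr k)

end Submodular

/-- Duality for submodular function minimization:
`min_{A ⊆ V} F(A) = max_{s ∈ B(F)} s₋(V)`, and for any `A` and `s ∈ B(F)`,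
`F(A) ≥ s₋(V)` with equality iff `{s < 0} ⊆ A ⊆ {s ≤ 0}` and `s(A) = F(A)`. -/
theorem submodular_min_duality {p : ℕ} (F : Finset (Fin p) → ℝ)
    (hF : Submodular F) (h0 : F ∅ = 0) :
    IsGreatest
        {x : ℝ | ∃ s : Fin p → ℝ, MemB F s ∧ x = ∑ k, min (s k) 0}
        (((Finset.univ : Finset (Finset (Fin p))).image F).min'
          (Finset.univ_nonempty.image F)) ∧
      ∀ (A : Finset (Fin p)) (s : Fin p → ℝ), MemB F s →
        (∑ k, min (s k) 0) ≤ F A ∧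
        ((∑ k, min (s k) 0) = F A ↔
          ((∀ k, s k < 0 → k ∈ A) ∧ (∀ k ∈ A, s k ≤ 0) ∧
            ∑ k ∈ A, s k = F A)) := by
  have hupper : ∀ s, MemB F s → ∑ k, min (s k) 0 ≤ (univ.image F).min' (univ_nonempty.image F) :=
    fun s hs => le_min' _ _ _ (by simpa using hs.memP.sum_min_zero_le)
  obtain ⟨r, hr, T, hT⟩ := hF.exists_memB_le_sum_min_zero h0
  have hmin_le : (univ.image F).min' (univ_nonempty.image F) ≤ ∑ k, min (r k) 0 :=
    (min'_le _ _ (mem_image_of_mem F (mem_univ T))).trans hT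
  refine ⟨⟨⟨r, hr, le_antisymm hmin_le (hupper r hr)⟩, ?_⟩, fun A s hs => ?_⟩
  · rintro x ⟨s, hs, rfl⟩
    exact hupper s hs
  · exact ⟨hs.memP.sum_min_zero_le A, hs.memP.sum_min_zero_eq_iff A⟩
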